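/- arXiv:1412.2196 — 6 statements merged into one kernel-verified Lean document; each statement's English description precedes it below -/
import Mathlib

section
/- If Z satisfies A = AZ, then ‖Z‖_* ≥ rank(A), and equality holds for Z = A†A; i.e., the minimum nuclear norm over the constraint set {Z : A = AZ} equals rank(A). -/
open Matrix

def IsMoorePenrose {m n : ℕ} (A : Matrix (Fin m) (Fin n) ℝ) (B : Matrix (Fin n) (Fin m) ℝ) : Prop :=
  A * B * A = A ∧ B * A * B = B ∧ (A * B)ᵀ = A * B ∧ (B * A)ᵀ = B * A

noncomputable def nuclearNorm {p q : ℕ} (M : Matrix (Fin p) (Fin q) ℝ) : ℝ :=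
  ∑ i, Real.sqrt ((Matrix.isHermitian_conjTranspose_mul_self M).eigenvalues i)

/-!
`P = A†A` is the orthogonal projection onto the row space of `A`, so its trace is its rank,
which is `rank A`. If `A = AZ` then `PZ = P`, and computing `tr (PZ)` in an orthonormal basis
`vᵢ` of right singular vectors of `Z` gives `⟪vᵢ, PZvᵢ⟫ = ⟪Pvᵢ, Zvᵢ⟫ ≤ ‖Zvᵢ‖ = σᵢ(Z)`, whence
`rank A ≤ ‖Z‖_*`. For `Z = P` itself the singular values are `0` or `1`, so `‖P‖_* = tr P`.
-/

open scoped RealInnerProductSpace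

theorem LinearMap.IsSymmetricProjection.norm_apply_le {𝕜 E : Type*} [RCLike 𝕜]
    [NormedAddCommGroup E] [InnerProductSpace 𝕜 E] {p : E →ₗ[𝕜] E}
    (hp : p.IsSymmetricProjection) (x : E) : ‖p x‖ ≤ ‖x‖ := by
  obtain ⟨K, _, rfl⟩ := isSymmetricProjection_iff_eq_coe_starProjection.mp hp
  exact K.norm_starProjection_apply_le x

namespace Matrix

theorem trace_eq_rank_of_isIdempotentElem {K n : Type*} [Field K] [Fintype n]
    [DecidableEq n] {P : Matrix n n K} (hP : IsIdempotentElem P) : P.trace = P.rank := by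
  have hP' : IsIdempotentElem (toLin' P) := hP.map toLinAlgEquiv'
  rw [← trace_toLin'_eq, (LinearMap.IsIdempotentElem.isProj_range _ hP').trace]
  rfl

theorem IsHermitian.eigenvalues_eq_zero_or_one_of_isIdempotentElem {𝕜 n : Type*} [RCLike 𝕜]
    [Fintype n] [DecidableEq n] {P : Matrix n n 𝕜} (hP : P.IsHermitian)
    (hPP : IsIdempotentElem P) (i : n) : hP.eigenvalues i = 0 ∨ hP.eigenvalues i = 1 :=
  hPP.spectrum_subset ℝ (hP.eigenvalues_mem_spectrum_real i)

theorem trace_eq_sum_inner_toEuclideanLin {𝕜 n ι : Type*} [RCLike 𝕜] [Fintype n]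
    [DecidableEq n] [Fintype ι] (M : Matrix n n 𝕜)
    (b : OrthonormalBasis ι 𝕜 (EuclideanSpace 𝕜 n)) :
    M.trace = ∑ i, inner 𝕜 (b i) (toEuclideanLin M (b i)) := by
  rw [← LinearMap.trace_eq_sum_inner, toEuclideanLin_eq_toLin_orthonormal,
    LinearMap.trace_eq_matrix_trace 𝕜 (EuclideanSpace.basisFun n 𝕜).toBasis,
    LinearMap.toMatrix_toLin]

theorem norm_toEuclideanLin_eigenvectorBasis {𝕜 m n : Type*} [RCLike 𝕜] [Fintype m]
    [Fintype n] [DecidableEq m] [DecidableEq n] (Z : Matrix m n 𝕜) (i : n) :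
    ‖toEuclideanLin Z ((isHermitian_conjTranspose_mul_self Z).eigenvectorBasis i)‖ =
      √((isHermitian_conjTranspose_mul_self Z).eigenvalues i) := by
  set hZ := isHermitian_conjTranspose_mul_self Z
  set v := hZ.eigenvectorBasis i
  have hv : toEuclideanLin (Zᴴ * Z) v = (hZ.eigenvalues i : 𝕜) • v := by
    rw [toLpLin_apply, hZ.mulVec_eigenvectorBasis, RCLike.real_smul_eq_coe_smul (K := 𝕜)]
    rfl
  have hsq : ‖toEuclideanLin Z v‖ ^ 2 = hZ.eigenvalues i := by
    rw [@norm_sq_eq_re_inner 𝕜, ← LinearMap.adjoint_inner_right,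
      ← toEuclideanLin_conjTranspose_eq_adjoint, ← LinearMap.comp_apply, ← toLpLin_mul_same, hv,
      inner_smul_right, inner_self_eq_norm_sq_to_K, hZ.eigenvectorBasis.orthonormal.1 i]
    simp
  rw [← hsq, Real.sqrt_sq (norm_nonneg _)]

end Matrix

theorem IsMoorePenrose.isStarProjection {m n : ℕ} {A : Matrix (Fin m) (Fin n) ℝ}
    {B : Matrix (Fin n) (Fin m) ℝ} (h : IsMoorePenrose A B) : IsStarProjection (B * A) :=
  ⟨by rw [IsIdempotentElem, ← Matrix.mul_assoc, h.2.1],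
    by rw [IsSelfAdjoint, star_eq_conjTranspose, conjTranspose_eq_transpose_of_trivial, h.2.2.2]⟩

theorem nuclearNorm_eq_trace_of_isStarProjection {k : ℕ} {P : Matrix (Fin k) (Fin k) ℝ}
    (hP : IsStarProjection P) : nuclearNorm P = P.trace := by
  have hPP : Pᴴ * P = P := by
    rw [← star_eq_conjTranspose, hP.isSelfAdjoint.star_eq, hP.isIdempotentElem.eq]
  have hidem : IsIdempotentElem (Pᴴ * P) := by rw [hPP]; exact hP.isIdempotentElem
  unfold nuclearNorm
  set h := isHermitian_conjTranspose_mul_self P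
  calc ∑ i, √(h.eigenvalues i) = ∑ i, h.eigenvalues i := by
        refine Finset.sum_congr rfl fun i _ => ?_
        rcases h.eigenvalues_eq_zero_or_one_of_isIdempotentElem hidem i with hi | hi <;>
          simp only [hi, Real.sqrt_zero, Real.sqrt_one]
    _ = (Pᴴ * P).trace := by
        rw [h.trace_eq_sum_eigenvalues]; simp only [RCLike.ofReal_real_eq_id, id]
    _ = P.trace := by rw [hPP]

theorem trace_mul_le_nuclearNorm {k : ℕ} {P : Matrix (Fin k) (Fin k) ℝ}
    (hP : IsStarProjection P) (Z : Matrix (Fin k) (Fin k) ℝ) :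
    (P * Z).trace ≤ nuclearNorm Z := by
  have hT : (toEuclideanLin P).IsSymmetricProjection := by
    simpa only [coe_toEuclideanCLM_eq_toEuclideanLin] using
      ContinuousLinearMap.IsStarProjection.isSymmetricProjection
        (hP.map (toEuclideanCLM (𝕜 := ℝ) (n := Fin k)))
  set b := (isHermitian_conjTranspose_mul_self Z).eigenvectorBasis
  rw [trace_eq_sum_inner_toEuclideanLin _ b, nuclearNorm]
  gcongr with i
  calc ⟪b i, toEuclideanLin (P * Z) (b i)⟫
      = ⟪toEuclideanLin P (b i), toEuclideanLin Z (b i)⟫ := by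
        rw [toLpLin_mul_same, LinearMap.comp_apply, hT.isSymmetric]
    _ ≤ ‖toEuclideanLin P (b i)‖ * ‖toEuclideanLin Z (b i)‖ := real_inner_le_norm _ _
    _ ≤ ‖b i‖ * ‖toEuclideanLin Z (b i)‖ := by gcongr; exact hT.norm_apply_le _
    _ = _ := by rw [b.orthonormal.1 i, one_mul, norm_toEuclideanLin_eigenvectorBasis]

theorem stmt_6 {m n : ℕ} (A : Matrix (Fin m) (Fin n) ℝ) (B : Matrix (Fin n) (Fin m) ℝ)
    (hB : IsMoorePenrose A B) :
    (∀ Z : Matrix (Fin n) (Fin n) ℝ, A = A * Z → (A.rank : ℝ) ≤ nuclearNorm Z) ∧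
    A = A * (B * A) ∧ nuclearNorm (B * A) = A.rank := by
  have hP := hB.isStarProjection
  have hA : A = A * (B * A) := by rw [← Matrix.mul_assoc, hB.1]
  have hrank : (B * A).rank = A.rank :=
    le_antisymm (rank_mul_le_right B A)
      ((congrArg rank hA).trans_le (rank_mul_le_right A (B * A)))
  have htrace : (B * A).trace = A.rank := by
    rw [trace_eq_rank_of_isIdempotentElem hP.isIdempotentElem, hrank]
  refine ⟨fun Z hZ => ?_, hA, by rw [nuclearNorm_eq_trace_of_isStarProjection hP, htrace]⟩
  calc (A.rank : ℝ) = (B * A * Z).trace := by rw [Matrix.mul_assoc B, ← hZ, htrace]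
    _ ≤ nuclearNorm Z := trace_mul_le_nuclearNorm hP Z
end

section
/- Let A = UΣVᵀ be the skinny SVD of A. Then for any matrix S with VᵀS = 0, the matrix Z = A†A + SVᵀ satisfies A = AZ and rank(Z) = rank(A); hence every such Z is an optimal solution of min_Z rank(Z) subject to A = AZ. -/
open Matrix

/-!
Write `A = M Vᵀ` with `M = U S`, which has the left inverse `S⁻¹ Uᵀ`. Since `A T = M Vᵀ T = 0`
and `A B A = A`, we get `A Z = A`, so `rank A ≤ rank Z`. Conversely `Z = (B M + T) Vᵀ` gives
`rank Z ≤ rank Vᵀ`, and left invertibility of `M` gives `rank Vᵀ = rank (M Vᵀ) = rank A`.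
Minimality follows because any `Z'` with `A = A Z'` has `rank A ≤ rank Z'`.
-/

namespace Matrix

variable {R k m n : Type*} [Fintype n]

theorem mul_mul_add_mul_eq_self [Fintype k] [Fintype m] [Semiring R] {A : Matrix m n R}
    {B : Matrix n m R} {T : Matrix n k R} (W : Matrix k n R) (hB : A * B * A = A) (hT : A * T = 0) :
    A * (B * A + T * W) = A := by
  rw [Matrix.mul_add, ← Matrix.mul_assoc, hB, ← Matrix.mul_assoc, hT, Matrix.zero_mul, add_zero]

variable [CommSemiring R] [StrongRankCondition R]

theorem rank_le_rank_of_mul_eq_self {A : Matrix m n R} {Z : Matrix n n R} (h : A * Z = A) :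
    A.rank ≤ Z.rank :=
  h ▸ rank_mul_le_right A Z

theorem rank_mul_eq_right_of_mul_eq_one [Fintype k] [DecidableEq k] [Fintype m]
    {L : Matrix k m R} {M : Matrix m k R} (N : Matrix k n R) (h : L * M = 1) :
    (M * N).rank = N.rank :=
  le_antisymm (rank_mul_le_right M N) <| by
    simpa only [← Matrix.mul_assoc, h, Matrix.one_mul] using rank_mul_le_right L (M * N)

theorem rank_mul_add_mul_eq_rank [Fintype k] [DecidableEq k] [Fintype m]
    {A : Matrix m n R} {B : Matrix n m R} {M : Matrix m k R} {L : Matrix k m R}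
    {W : Matrix k n R} {T : Matrix n k R}
    (hA : A = M * W) (hL : L * M = 1) (hB : A * B * A = A) (hT : A * T = 0) :
    (B * A + T * W).rank = A.rank := by
  refine le_antisymm ?_ (rank_le_rank_of_mul_eq_self (mul_mul_add_mul_eq_self W hB hT))
  calc (B * A + T * W).rank = ((B * M + T) * W).rank := by
        rw [Matrix.add_mul, Matrix.mul_assoc, ← hA]
    _ ≤ W.rank := rank_mul_le_right _ _
    _ = A.rank := by rw [hA, rank_mul_eq_right_of_mul_eq_one W hL]

end Matrix

theorem stmt_7_general {m n r : ℕ} (A : Matrix (Fin m) (Fin n) ℝ) (B : Matrix (Fin n) (Fin m) ℝ)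
    (U : Matrix (Fin m) (Fin r) ℝ) (V : Matrix (Fin n) (Fin r) ℝ) (S : Matrix (Fin r) (Fin r) ℝ)
    (hU : Uᵀ * U = 1)
    (hS : ∃ d : Fin r → ℝ, S = Matrix.diagonal d ∧ ∀ i, 0 < d i)
    (hA : A = U * S * Vᵀ) (hB : IsMoorePenrose A B)
    (T : Matrix (Fin n) (Fin r) ℝ) (hT : Vᵀ * T = 0) :
    A = A * (B * A + T * Vᵀ) ∧ (B * A + T * Vᵀ).rank = A.rank ∧
    ∀ Z : Matrix (Fin n) (Fin n) ℝ, A = A * Z → (B * A + T * Vᵀ).rank ≤ Z.rank := by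
  obtain ⟨d, rfl, hd⟩ := hS
  have hdet : IsUnit (diagonal d).det := by
    rw [det_diagonal]
    exact (Finset.prod_pos fun i _ => hd i).ne'.isUnit
  have hUS_left_inv : ((diagonal d)⁻¹ * Uᵀ) * (U * diagonal d) = 1 := by
    rw [Matrix.mul_assoc, ← Matrix.mul_assoc Uᵀ, hU, Matrix.one_mul, nonsing_inv_mul _ hdet]
  have hAT : A * T = 0 := by rw [hA, Matrix.mul_assoc, hT, Matrix.mul_zero]
  have hrank := rank_mul_add_mul_eq_rank hA hUS_left_inv hB.1 hAT
  refine ⟨(mul_mul_add_mul_eq_self Vᵀ hB.1 hAT).symm, hrank, fun Z hZ => ?_⟩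
  exact hrank ▸ rank_le_rank_of_mul_eq_self hZ.symm

theorem stmt_7 {m n r : ℕ} (A : Matrix (Fin m) (Fin n) ℝ) (B : Matrix (Fin n) (Fin m) ℝ)
    (U : Matrix (Fin m) (Fin r) ℝ) (V : Matrix (Fin n) (Fin r) ℝ) (S : Matrix (Fin r) (Fin r) ℝ)
    (hU : Uᵀ * U = 1) (hV : Vᵀ * V = 1)
    (hS : ∃ d : Fin r → ℝ, S = Matrix.diagonal d ∧ ∀ i, 0 < d i)
    (hA : A = U * S * Vᵀ) (hB : IsMoorePenrose A B)
    (T : Matrix (Fin n) (Fin r) ℝ) (hT : Vᵀ * T = 0) :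
    A = A * (B * A + T * Vᵀ) ∧ (B * A + T * Vᵀ).rank = A.rank ∧
    ∀ Z : Matrix (Fin n) (Fin n) ℝ, A = A * Z → (B * A + T * Vᵀ).rank ≤ Z.rank :=
  stmt_7_general A B U V S hU hS hA hB T hT
end

section
/- Conversely, every matrix Z satisfying A = AZ and rank(Z) = rank(A) has the form Z = A†A + SVᵀ for some matrix S with VᵀS = 0, where A = UΣVᵀ is the skinny SVD of A. -/
open Matrix

/-! Multiplying `A = A * Z` on the left by a left inverse of `U * S` gives `Vᵀ * Z = Vᵀ`, so the
column space of `Zᵀ` contains the `r` independent columns of `V`; as `rank Z = r` the two column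
spaces coincide, and since `V * Vᵀ` fixes the columns of `V`, `Z = Z * V * Vᵀ`. On the other hand
`A† * A` is the orthogonal projection `V * Vᵀ` onto the row space of `A`. Hence `T = Z * V - V`
works: `Vᵀ * T = Vᵀ * V - 1 = 0` and `A† * A + T * Vᵀ = Z * V * Vᵀ = Z`. -/

namespace Matrix

variable {K : Type*} [Field K] {m n r : Type*} [Fintype m] [Fintype r]

theorem rank_eq_card_of_mul_eq_one [DecidableEq r] {L : Matrix r m K} {N : Matrix m r K}
    (h : L * N = 1) : N.rank = Fintype.card r :=
  le_antisymm N.rank_le_card_width <| by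
    simpa [h, rank_one] using rank_mul_le_right L N

theorem mul_eq_self_of_range_le [Fintype n] {P : Matrix m m K} {N : Matrix m r K}
    {M : Matrix m n K} (hP : P * N = N)
    (h : LinearMap.range M.mulVecLin ≤ LinearMap.range N.mulVecLin) : P * M = M := by
  refine ext_iff_mulVec.mpr fun x => ?_
  obtain ⟨y, hy⟩ := h ⟨x, rfl⟩
  change N *ᵥ y = M *ᵥ x at hy
  rw [← mulVec_mulVec, ← hy, mulVec_mulVec, hP]

theorem mul_mul_eq_self_of_mul_eq_of_rank_le [DecidableEq r] {L : Matrix r m K} {N : Matrix m r K}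
    {M : Matrix m m K} (hLN : L * N = 1) (hMN : M * N = N) (hrk : M.rank ≤ Fintype.card r) :
    N * L * M = M := by
  have hle : LinearMap.range N.mulVecLin ≤ LinearMap.range M.mulVecLin := by
    rw [← hMN, mulVecLin_mul]
    exact LinearMap.range_comp_le_range _ _
  have hrange := Submodule.eq_of_le_of_finrank_le hle <| by
    change M.rank ≤ N.rank
    rwa [rank_eq_card_of_mul_eq_one hLN]
  refine mul_eq_self_of_range_le (N := N) ?_ hrange.ge
  rw [Matrix.mul_assoc, hLN, Matrix.mul_one]

theorem eq_mul_transpose_mul_of_eq_mul_mul [DecidableEq r] {U : Matrix m r K} {S S' : Matrix r r K}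
    {W : Matrix r n K} {A : Matrix m n K} (hU : Uᵀ * U = 1) (hS : S' * S = 1)
    (hA : A = U * S * W) : W = S' * Uᵀ * A := by
  rw [hA, Matrix.mul_assoc S', ← Matrix.mul_assoc Uᵀ, ← Matrix.mul_assoc Uᵀ, hU, Matrix.one_mul,
    ← Matrix.mul_assoc, hS, Matrix.one_mul]

end Matrix

theorem IsMoorePenrose.mul_eq_mul_transpose {m n r : ℕ} {A : Matrix (Fin m) (Fin n) ℝ}
    {B : Matrix (Fin n) (Fin m) ℝ} (hB : IsMoorePenrose A B) {V : Matrix (Fin n) (Fin r) ℝ}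
    {X : Matrix (Fin m) (Fin r) ℝ} {Y : Matrix (Fin r) (Fin m) ℝ} (hV : Vᵀ * V = 1)
    (hA : A = X * Vᵀ) (hVt : Vᵀ = Y * A) : B * A = V * Vᵀ := by
  have hBA : B * A = V * (Xᵀ * Bᵀ) := by
    rw [← hB.2.2.2, transpose_mul, hA, transpose_mul, transpose_transpose, Matrix.mul_assoc]
  have hVtBA : Vᵀ * (B * A) = Vᵀ := by
    rw [hVt, Matrix.mul_assoc, ← Matrix.mul_assoc A, hB.1]
  rw [hBA, ← Matrix.mul_assoc, hV, Matrix.one_mul] at hVtBA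
  rw [hBA, hVtBA]

theorem stmt_8 {m n r : ℕ} (A : Matrix (Fin m) (Fin n) ℝ) (B : Matrix (Fin n) (Fin m) ℝ)
    (U : Matrix (Fin m) (Fin r) ℝ) (V : Matrix (Fin n) (Fin r) ℝ) (S : Matrix (Fin r) (Fin r) ℝ)
    (hU : Uᵀ * U = 1) (hV : Vᵀ * V = 1)
    (hS : ∃ d : Fin r → ℝ, S = Matrix.diagonal d ∧ ∀ i, 0 < d i)
    (hA : A = U * S * Vᵀ) (hB : IsMoorePenrose A B)
    (Z : Matrix (Fin n) (Fin n) ℝ) (hZ : A = A * Z) (hrk : Z.rank = A.rank) :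
    ∃ T : Matrix (Fin n) (Fin r) ℝ, Vᵀ * T = 0 ∧ Z = B * A + T * Vᵀ := by
  obtain ⟨d, rfl, hd⟩ := hS
  have hSinv : diagonal d⁻¹ * diagonal d = 1 := by
    rw [diagonal_mul_diagonal, ← diagonal_one]
    exact congrArg diagonal (funext fun i => inv_mul_cancel₀ (hd i).ne')
  have hVt := eq_mul_transpose_mul_of_eq_mul_mul hU hSinv hA
  have hVZ : Vᵀ * Z = Vᵀ := by rw [hVt, Matrix.mul_assoc _ A, ← hZ]
  have hrkA : A.rank = r := by
    calc A.rank = Vᵀ.rank :=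
          le_antisymm (hA ▸ rank_mul_le_right _ _) (hVt ▸ rank_mul_le_right _ _)
      _ = r := by rw [rank_transpose, rank_eq_card_of_mul_eq_one hV, Fintype.card_fin]
  have hZV : Z * V * Vᵀ = Z := by
    have := mul_mul_eq_self_of_mul_eq_of_rank_le hV (by simpa using congrArg transpose hVZ)
      (by simp [hrk, hrkA])
    simpa [Matrix.mul_assoc] using congrArg transpose this
  refine ⟨Z * V - V, ?_, ?_⟩
  · rw [Matrix.mul_sub, ← Matrix.mul_assoc, hVZ, sub_self]
  · rw [hB.mul_eq_mul_transpose hV hA hVt, Matrix.sub_mul, hZV]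
    abel
end

section
/- The unique minimizer of ‖Z‖_* subject to A = AZ is Z* = VVᵀ = A†A, where A = UΣVᵀ is the skinny SVD of A; that is, any Z with A = AZ and ‖Z‖_* = rank(A) must equal A†A. -/
open Matrix

/-!
Both `B * A` and `V * Vᵀ` are the orthogonal projection `P` onto the row space of `A`, which is
determined by `A` alone. If `A * Z = A` then `P * Z = P`, so with `W = Z - P` we get
`Zᵀ * Z = P + Wᵀ * W ≥ P`. By operator monotonicity of the square root,
`|Z| = √(Zᵀ * Z) ≥ √P = P`, and `tr |Z| = ‖Z‖_* = rank A = tr P` forces `|Z| = P`; hence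
`Wᵀ * W = 0` and `Z = P`.
-/

namespace Matrix

variable {m n k R : Type*}

def IsRowSpaceProjection [Fintype m] [Fintype n] [CommSemiring R] (A : Matrix m n R)
    (X : Matrix n n R) : Prop :=
  X.IsSymm ∧ A * X = A ∧ ∃ M : Matrix n m R, X = M * A

namespace IsRowSpaceProjection

variable [Fintype m] [Fintype n] [CommSemiring R] {A : Matrix m n R} {X Y : Matrix n n R}

lemma mul_eq_self_of_mul_eq (hX : A.IsRowSpaceProjection X) {Z : Matrix n n R}
    (hAZ : A * Z = A) : X * Z = X := by
  obtain ⟨M, rfl⟩ := hX.2.2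
  rw [Matrix.mul_assoc, hAZ]

lemma mul_self (hX : A.IsRowSpaceProjection X) : X * X = X :=
  hX.mul_eq_self_of_mul_eq hX.2.1

theorem unique (hX : A.IsRowSpaceProjection X) (hY : A.IsRowSpaceProjection Y) : X = Y := by
  calc X = X * Y := (hX.mul_eq_self_of_mul_eq hY.2.1).symm
    _ = (Y * X)ᵀ := by rw [transpose_mul, hX.1.eq, hY.1.eq]
    _ = Y := by rw [hY.mul_eq_self_of_mul_eq hX.2.1, hY.1.eq]

end IsRowSpaceProjection

lemma IsRowSpaceProjection.posSemidef [Fintype m] [Fintype n] [DecidableEq n]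
    {A : Matrix m n ℝ} {X : Matrix n n ℝ} (hX : A.IsRowSpaceProjection X) : X.PosSemidef := by
  have h : Xᴴ * X = X := by rw [conjTranspose_eq_transpose_of_trivial, hX.1.eq, hX.mul_self]
  exact h ▸ posSemidef_conjTranspose_mul_self X

lemma isRowSpaceProjection_mul_transpose [Fintype m] [Fintype n] [Fintype k] [DecidableEq k]
    [CommSemiring R] {A : Matrix m n R} {V : Matrix n k R} {W : Matrix m k R} {L : Matrix k m R}
    (hV : Vᵀ * V = 1) (hA : A = W * Vᵀ) (hVA : Vᵀ = L * A) : A.IsRowSpaceProjection (V * Vᵀ) := by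
  refine ⟨by simp [IsSymm, transpose_mul], ?_, V * L, by rw [Matrix.mul_assoc, ← hVA]⟩
  rw [hA, Matrix.mul_assoc, ← Matrix.mul_assoc Vᵀ, hV, Matrix.one_mul]

lemma rank_eq_of_mul_transpose [Fintype m] [Fintype n] [Fintype k] [DecidableEq k] [Field R]
    {A : Matrix m n R} {V : Matrix n k R} {W : Matrix m k R} {L : Matrix k m R}
    (hV : Vᵀ * V = 1) (hA : A = W * Vᵀ) (hVA : Vᵀ = L * A) : A.rank = Fintype.card k := by
  have hAV : A.rank = Vᵀ.rank :=
    le_antisymm (hA ▸ rank_mul_le_right W Vᵀ) (hVA ▸ rank_mul_le_right L A)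
  refine hAV ▸ le_antisymm (rank_le_card_height Vᵀ) ?_
  calc Fintype.card k = (Vᵀ * V).rank := by rw [hV, rank_one]
    _ ≤ Vᵀ.rank := rank_mul_le_left Vᵀ V

lemma transpose_eq_mul_of_eq_mul_mul_transpose [Fintype m] [Fintype k] [DecidableEq k]
    [CommRing R] {A : Matrix m n R} {U : Matrix m k R} {S : Matrix k k R} {V : Matrix n k R}
    (hU : Uᵀ * U = 1) (hS : IsUnit S.det) (hA : A = U * S * Vᵀ) : Vᵀ = (S⁻¹ * Uᵀ) * A := by
  rw [hA, Matrix.mul_assoc, ← Matrix.mul_assoc Uᵀ, ← Matrix.mul_assoc Uᵀ, hU, Matrix.one_mul,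
    ← Matrix.mul_assoc, nonsing_inv_mul S hS, Matrix.one_mul]

end Matrix

lemma IsMoorePenrose.isRowSpaceProjection {m n : ℕ} {A : Matrix (Fin m) (Fin n) ℝ}
    {B : Matrix (Fin n) (Fin m) ℝ} (hB : IsMoorePenrose A B) : A.IsRowSpaceProjection (B * A) :=
  ⟨hB.2.2.2, by rw [← Matrix.mul_assoc, hB.1], B, rfl⟩

open scoped MatrixOrder

lemma Matrix.PosSemidef.trace_sqrt {n : Type*} [Fintype n] [DecidableEq n]
    {M : Matrix n n ℝ} (hM : M.PosSemidef) :
    (CFC.sqrt M).trace = ∑ i, Real.sqrt (hM.1.eigenvalues i) := by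
  rw [CFC.sqrt_eq_cfc, cfc_nnreal_eq_real _ M, hM.1.cfc_eq, IsHermitian.cfc,
    Unitary.conjStarAlgAut_apply, trace_mul_cycle, Unitary.coe_star_mul_self, one_mul,
    trace_diagonal]
  simp [hM.eigenvalues_nonneg]

lemma nuclearNorm_eq_trace_sqrt {p q : ℕ} (M : Matrix (Fin p) (Fin q) ℝ) :
    nuclearNorm M = (CFC.sqrt (Mᴴ * M)).trace :=
  ((posSemidef_conjTranspose_mul_self M).trace_sqrt).symm

/-- Operator monotonicity of the square root (Mathlib's `CFC.sqrt_le_sqrt` needs a C⋆-algebra,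
which real matrices are not). If `X - Y` had an eigenvector `v` with eigenvalue `μ < 0`, then
`0 ≤ v ⬝ (X² - Y²) v = μ · v ⬝ (X + Y) v ≤ 0` would give `v ⬝ X v = v ⬝ Y v = 0`, hence
`μ = v ⬝ (X - Y) v = 0`. -/
lemma Matrix.PosSemidef.sub_of_mul_self_sub {n : Type*} [Fintype n] [DecidableEq n]
    {X Y : Matrix n n ℝ} (hX : X.PosSemidef) (hY : Y.PosSemidef)
    (h : (X * X - Y * Y).PosSemidef) : (X - Y).PosSemidef := by
  have hD : (X - Y).IsHermitian := hX.1.sub hY.1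
  refine hD.posSemidef_iff_eigenvalues_nonneg.mpr fun i => ?_
  by_contra! hneg
  set μ := hD.eigenvalues i
  change μ < 0 at hneg
  set v : n → ℝ := ⇑(hD.eigenvectorBasis i)
  have hDv : (X - Y) *ᵥ v = μ • v := hD.mulVec_eigenvectorBasis i
  have hμ : μ = v ⬝ᵥ (X *ᵥ v) - v ⬝ᵥ (Y *ᵥ v) := by
    simpa [sub_mulVec] using hD.eigenvalues_eq i
  have hXv : 0 ≤ v ⬝ᵥ (X *ᵥ v) := by simpa using hX.dotProduct_mulVec_nonneg v
  have hYv : 0 ≤ v ⬝ᵥ (Y *ᵥ v) := by simpa using hY.dotProduct_mulVec_nonneg v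
  have hsq : 0 ≤ μ * (v ⬝ᵥ (X *ᵥ v) + v ⬝ᵥ (Y *ᵥ v)) := by
    have hDT : (X - Y)ᵀ = X - Y := hD.eq
    have hsym : ∀ w, v ⬝ᵥ ((X - Y) *ᵥ w) = μ * (v ⬝ᵥ w) := fun w => by
      rw [dotProduct_mulVec, ← mulVec_transpose, hDT, hDv, smul_dotProduct, smul_eq_mul]
    have hsplit : (2 : ℝ) • (X * X - Y * Y) = (X + Y) * (X - Y) + (X - Y) * (X + Y) := by
      rw [two_smul]; noncomm_ring
    have h2 := (h.smul (zero_le_two (α := ℝ))).dotProduct_mulVec_nonneg v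
    rw [hsplit, star_trivial, add_mulVec, ← mulVec_mulVec, ← mulVec_mulVec, hDv, dotProduct_add,
      hsym, mulVec_smul, dotProduct_smul, smul_eq_mul, add_mulVec, dotProduct_add] at h2
    linarith
  nlinarith

lemma Matrix.conjTranspose_mul_self_eq_add_of_mul_eq_self {n : Type*} [Fintype n]
    {P Z : Matrix n n ℝ} (hP : P.IsHermitian) (hPP : P * P = P) (hPZ : P * Z = P) :
    Zᴴ * Z = P + (Z - P)ᴴ * (Z - P) := by
  have hPW : P * (Z - P) = 0 := by rw [Matrix.mul_sub, hPZ, hPP, sub_self]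
  have hWP : (Z - P)ᴴ * P = 0 := by
    rw [← hP.eq, ← conjTranspose_mul, hP.eq, hPW, conjTranspose_zero]
  conv_lhs => rw [← add_sub_cancel P Z]
  rw [conjTranspose_add, hP.eq, Matrix.add_mul, Matrix.mul_add, Matrix.mul_add, hPP, hPW, hWP]
  abel

lemma eq_of_mul_eq_self_of_nuclearNorm_le {n : ℕ} {P Z : Matrix (Fin n) (Fin n) ℝ}
    (hP : P.PosSemidef) (hPP : P * P = P) (hPZ : P * Z = P) (hZ : nuclearNorm Z ≤ P.trace) :
    Z = P := by
  have hZZ := conjTranspose_mul_self_eq_add_of_mul_eq_self hP.1 hPP hPZ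
  have hZZ_psd := posSemidef_conjTranspose_mul_self Z
  have hle : (CFC.sqrt (Zᴴ * Z) - P).PosSemidef := by
    refine (CFC.sqrt_nonneg _).posSemidef.sub_of_mul_self_sub hP ?_
    rw [CFC.sqrt_mul_sqrt_self _ hZZ_psd.nonneg, hPP, hZZ, add_sub_cancel_left]
    exact posSemidef_conjTranspose_mul_self _
  have hsqrt : CFC.sqrt (Zᴴ * Z) = P := by
    refine sub_eq_zero.mp (hle.trace_eq_zero_iff.mp (le_antisymm ?_ hle.trace_nonneg))
    rw [trace_sub, ← nuclearNorm_eq_trace_sqrt]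
    linarith
  have hW : (Z - P)ᴴ * (Z - P) = 0 := by
    rw [← CFC.sqrt_mul_sqrt_self (Zᴴ * Z) hZZ_psd.nonneg, hsqrt, hPP] at hZZ
    simpa using hZZ
  exact sub_eq_zero.mp (conjTranspose_mul_self_eq_zero.mp hW)

theorem stmt_9 {m n r : ℕ} (A : Matrix (Fin m) (Fin n) ℝ) (B : Matrix (Fin n) (Fin m) ℝ)
    (U : Matrix (Fin m) (Fin r) ℝ) (V : Matrix (Fin n) (Fin r) ℝ) (S : Matrix (Fin r) (Fin r) ℝ)
    (hU : Uᵀ * U = 1) (hV : Vᵀ * V = 1)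
    (hS : ∃ d : Fin r → ℝ, S = Matrix.diagonal d ∧ ∀ i, 0 < d i)
    (hA : A = U * S * Vᵀ) (hB : IsMoorePenrose A B) :
    B * A = V * Vᵀ ∧
    ∀ Z : Matrix (Fin n) (Fin n) ℝ, A = A * Z → nuclearNorm Z = A.rank → Z = B * A := by
  obtain ⟨d, rfl, hd⟩ := hS
  have hdet : IsUnit (diagonal d).det := by
    simpa [det_diagonal, Finset.prod_ne_zero_iff] using fun i => (hd i).ne'
  have hVA := transpose_eq_mul_of_eq_mul_mul_transpose hU hdet hA
  replace hA : A = (U * diagonal d) * Vᵀ := hA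
  have hP := isRowSpaceProjection_mul_transpose hV hA hVA
  have hBA : B * A = V * Vᵀ := hB.isRowSpaceProjection.unique hP
  refine ⟨hBA, fun Z hAZ hZ => hBA ▸ ?_⟩
  refine eq_of_mul_eq_self_of_nuclearNorm_le hP.posSemidef hP.mul_self
    (hP.mul_eq_self_of_mul_eq hAZ.symm) (le_of_eq ?_)
  rw [hZ, rank_eq_of_mul_transpose hV hA hVA, trace_mul_comm, hV, trace_one]
end

section
/- The minimum of rank(Z) + rank(L) over all (Z, L) satisfying A = AZ + LA equals rank(A), attained for instance by Z = A†A, L = 0. -/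
open Matrix

namespace Matrix

variable {m n : Type*} [Fintype n]

theorem rank_add_le {K : Type*} [Field K] (X Y : Matrix m n K) :
    (X + Y).rank ≤ X.rank + Y.rank := by
  rw [rank, rank, rank, mulVecLin_add]
  exact (Submodule.finrank_mono (LinearMap.range_add_le _ _)).trans
    (Submodule.finrank_add_le_finrank_add_finrank _ _)

theorem rank_le_rank_add_rank_of_eq_mul_add_mul [Fintype m] {K : Type*} [Field K] {A : Matrix m n K}
    {Z : Matrix n n K} {L : Matrix m m K} (h : A = A * Z + L * A) :
    A.rank ≤ Z.rank + L.rank :=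
  calc A.rank = (A * Z + L * A).rank := by rw [← h]
    _ ≤ (A * Z).rank + (L * A).rank := rank_add_le _ _
    _ ≤ Z.rank + L.rank := add_le_add (rank_mul_le_right _ _) (rank_mul_le_left _ _)

theorem rank_mul_eq_right_of_mul_mul_eq [Fintype m] {R : Type*} [CommRing R] [StrongRankCondition R]
    {A : Matrix m n R} {B : Matrix n m R} (h : A * B * A = A) : (B * A).rank = A.rank := by
  refine le_antisymm (rank_mul_le_right _ _) ?_
  calc A.rank = (A * (B * A)).rank := by rw [← Matrix.mul_assoc, h]
    _ ≤ (B * A).rank := rank_mul_le_right _ _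

end Matrix

theorem stmt_12 {m n : ℕ} (A : Matrix (Fin m) (Fin n) ℝ) (B : Matrix (Fin n) (Fin m) ℝ)
    (hB : IsMoorePenrose A B) :
    (∀ (Z : Matrix (Fin n) (Fin n) ℝ) (L : Matrix (Fin m) (Fin m) ℝ),
        A = A * Z + L * A → A.rank ≤ Z.rank + L.rank) ∧
    A = A * (B * A) + (0 : Matrix (Fin m) (Fin m) ℝ) * A ∧
    (B * A).rank + (0 : Matrix (Fin m) (Fin m) ℝ).rank = A.rank := by
  obtain ⟨hABA, -⟩ := hB
  refine ⟨fun Z L h => rank_le_rank_add_rank_of_eq_mul_add_mul h, ?_, ?_⟩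
  · rw [Matrix.zero_mul, add_zero, ← Matrix.mul_assoc, hABA]
  · rw [rank_zero, add_zero, rank_mul_eq_right_of_mul_mul_eq hABA]
end

section
/- For any (Z, L) satisfying A = AZ + LA, one has ‖Z‖_* + ‖L‖_* ≥ rank(A); hence the minimum objective value of min_{Z,L} ‖Z‖_* + ‖L‖_* subject to A = AZ + LA equals rank(A). -/
/-!
Let `v_i` be the eigenvectors of `AᵀA` with eigenvalue `σ_i² > 0` and `u_i = A v_i / σ_i`; these
are `rank A` orthonormal pairs with `A v_i = σ_i u_i` and `Aᵀ u_i = σ_i v_i`. Pairing `A = AZ + LA`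
with `u_i` on the left and `v_i` on the right gives `1 = ⟪v_i, Z v_i⟫ + ⟪u_i, L u_i⟫`, so `rank A`
is a sum of two partial traces `∑ ⟪u_i, M w_i⟫` over orthonormal families. Such a sum is at most
`‖M‖_*`: expanding `w_i` in the right singular basis `q_j` of `M` bounds it by `∑_j ‖M q_j‖`
through Cauchy–Schwarz and Bessel. The bound is attained by `L = 0` and `Z` the orthogonal
projection onto the row space of `A`, since a projection has only the singular values `0` and `1`.
-/

open Matrix

open scoped InnerProductSpace

section InnerProduct

variable {E F : Type*} [NormedAddCommGroup E] [InnerProductSpace ℝ E]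
  [NormedAddCommGroup F] [InnerProductSpace ℝ F]

theorem Orthonormal.sqrt_sum_inner_sq_le {ι : Type*} {b : ι → E} (hb : Orthonormal ℝ b)
    (s : Finset ι) (x : E) : √(∑ i ∈ s, ⟪b i, x⟫_ℝ ^ 2) ≤ ‖x‖ := by
  rw [Real.sqrt_le_left (norm_nonneg x)]
  simpa only [Real.norm_eq_abs, sq_abs] using hb.sum_inner_products_le x

theorem Orthonormal.sum_inner_mul_inner_le {ι : Type*} {w : ι → E} {u : ι → F}
    (hw : Orthonormal ℝ w) (hu : Orthonormal ℝ u) (s : Finset ι) (x : E) (y : F) :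
    ∑ i ∈ s, ⟪x, w i⟫_ℝ * ⟪u i, y⟫_ℝ ≤ ‖x‖ * ‖y‖ := by
  calc ∑ i ∈ s, ⟪x, w i⟫_ℝ * ⟪u i, y⟫_ℝ
      ≤ √(∑ i ∈ s, ⟪w i, x⟫_ℝ ^ 2) * √(∑ i ∈ s, ⟪u i, y⟫_ℝ ^ 2) := by
        simpa only [real_inner_comm x] using Real.sum_mul_le_sqrt_mul_sqrt s _ _
    _ ≤ ‖x‖ * ‖y‖ :=
        mul_le_mul (hw.sqrt_sum_inner_sq_le s x) (hu.sqrt_sum_inner_sq_le s y)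
          (Real.sqrt_nonneg _) (norm_nonneg x)

variable [FiniteDimensional ℝ E] [FiniteDimensional ℝ F]

theorem LinearMap.inner_map_map_of_adjoint_map_eq_smul {T : E →ₗ[ℝ] F} {y : E} {μ : ℝ}
    (h : LinearMap.adjoint T (T y) = μ • y) (x : E) : ⟪T x, T y⟫_ℝ = μ * ⟪x, y⟫_ℝ := by
  rw [← LinearMap.adjoint_inner_right, h, real_inner_smul_right]

theorem LinearMap.norm_map_eq_sqrt_of_adjoint_map_eq_smul {T : E →ₗ[ℝ] F} {y : E} {μ : ℝ}
    (h : LinearMap.adjoint T (T y) = μ • y) (hy : ‖y‖ = 1) : ‖T y‖ = √μ := by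
  rw [← Real.sqrt_sq (norm_nonneg (T y)), ← real_inner_self_eq_norm_sq,
    T.inner_map_map_of_adjoint_map_eq_smul h, real_inner_self_eq_norm_sq, hy, one_pow, mul_one]

theorem LinearMap.exists_singular_pairs (T : E →ₗ[ℝ] F) {ι : Type*} {v : ι → E}
    (hv : Orthonormal ℝ v) {μ : ι → ℝ} (hμ : ∀ i, LinearMap.adjoint T (T (v i)) = μ i • v i)
    (hμ0 : ∀ i, μ i ≠ 0) :
    ∃ (u : ι → F) (σ : ι → ℝ), Orthonormal ℝ u ∧
      ∀ i, σ i ≠ 0 ∧ T (v i) = σ i • u i ∧ LinearMap.adjoint T (u i) = σ i • v i := by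
  have hTv (i j : ι) : ⟪T (v i), T (v j)⟫_ℝ = μ j * ⟪v i, v j⟫_ℝ :=
    T.inner_map_map_of_adjoint_map_eq_smul (hμ j) (v i)
  have hμ_pos (i : ι) : 0 < μ i := by
    refine lt_of_le_of_ne ?_ (hμ0 i).symm
    have := real_inner_self_nonneg (x := T (v i))
    rwa [hTv, real_inner_self_eq_norm_sq, hv.1 i, one_pow, mul_one] at this
  set σ : ι → ℝ := fun i ↦ √(μ i)
  have hσ0 (i : ι) : σ i ≠ 0 := (Real.sqrt_pos.mpr (hμ_pos i)).ne'
  have hσσ (i : ι) : σ i * σ i = μ i := Real.mul_self_sqrt (hμ_pos i).le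
  refine ⟨fun i ↦ (σ i)⁻¹ • T (v i), σ, ?_, fun i ↦ ⟨hσ0 i, (smul_inv_smul₀ (hσ0 i) _).symm, ?_⟩⟩
  · classical
    rw [orthonormal_iff_ite]
    intro i j
    rw [real_inner_smul_left, real_inner_smul_right, hTv, orthonormal_iff_ite.mp hv]
    split_ifs with hij
    · subst hij
      rw [mul_one, ← hσσ]
      field_simp [hσ0 i]
    · simp
  · rw [map_smul, hμ, smul_smul, ← hσσ, inv_mul_cancel_left₀ (hσ0 i)]

theorem LinearMap.inner_add_inner_eq_one_of_eq_comp_add_comp {T : E →ₗ[ℝ] F} {Z : E →ₗ[ℝ] E}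
    {L : F →ₗ[ℝ] F} (h : T = T ∘ₗ Z + L ∘ₗ T) {v : E} {u : F} {σ : ℝ} (hσ : σ ≠ 0)
    (hu : ‖u‖ = 1) (hTv : T v = σ • u) (hTu : LinearMap.adjoint T u = σ • v) :
    ⟪v, Z v⟫_ℝ + ⟪u, L u⟫_ℝ = 1 := by
  have key : ⟪u, T v⟫_ℝ = ⟪u, T (Z v)⟫_ℝ + ⟪u, L (T v)⟫_ℝ := by
    conv_lhs => rw [h]
    simp only [LinearMap.add_apply, LinearMap.comp_apply, inner_add_right]
  rw [← LinearMap.adjoint_inner_left T (Z v), hTu, hTv, real_inner_smul_right,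
    real_inner_self_eq_norm_sq, hu, map_smul, real_inner_smul_left, real_inner_smul_right] at key
  apply mul_left_cancel₀ hσ
  linarith

end InnerProduct

theorem Matrix.adjoint_toEuclideanLin_apply_eigenvectorBasis {m n : Type*} [Fintype m] [Fintype n]
    [DecidableEq n] (M : Matrix m n ℝ) (j : n) :
    LinearMap.adjoint (toEuclideanLin M)
        (toEuclideanLin M ((isHermitian_conjTranspose_mul_self M).eigenvectorBasis j)) =
      (isHermitian_conjTranspose_mul_self M).eigenvalues j •
        (isHermitian_conjTranspose_mul_self M).eigenvectorBasis j := by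
  classical
  rw [← toEuclideanLin_conjTranspose_eq_adjoint, ← LinearMap.comp_apply, ← toLpLin_mul_same,
    toLpLin_apply, IsHermitian.mulVec_eigenvectorBasis]
  rfl

theorem sum_inner_toEuclideanLin_le_nuclearNorm {p q : ℕ} (M : Matrix (Fin p) (Fin q) ℝ)
    {ι : Type*} {u : ι → EuclideanSpace ℝ (Fin p)} {w : ι → EuclideanSpace ℝ (Fin q)}
    (hu : Orthonormal ℝ u) (hw : Orthonormal ℝ w) (s : Finset ι) :
    ∑ i ∈ s, ⟪u i, toEuclideanLin M (w i)⟫_ℝ ≤ nuclearNorm M := by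
  set Q := (isHermitian_conjTranspose_mul_self M).eigenvectorBasis
  set T := toEuclideanLin M
  have expand (i : ι) : ⟪u i, T (w i)⟫_ℝ = ∑ j, ⟪Q j, w i⟫_ℝ * ⟪u i, T (Q j)⟫_ℝ := by
    conv_lhs => rw [← Q.sum_repr' (w i)]
    simp only [map_sum, map_smul, inner_sum, real_inner_smul_right]
  calc ∑ i ∈ s, ⟪u i, T (w i)⟫_ℝ = ∑ j, ∑ i ∈ s, ⟪Q j, w i⟫_ℝ * ⟪u i, T (Q j)⟫_ℝ := by
        simp_rw [expand]; exact Finset.sum_comm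
    _ ≤ ∑ j, ‖Q j‖ * ‖T (Q j)‖ :=
        Finset.sum_le_sum fun j _ ↦ hw.sum_inner_mul_inner_le hu s _ _
    _ = nuclearNorm M := by
        refine Finset.sum_congr rfl fun j _ ↦ ?_
        rw [Q.orthonormal.1 j, one_mul, T.norm_map_eq_sqrt_of_adjoint_map_eq_smul
          (M.adjoint_toEuclideanLin_apply_eigenvectorBasis j) (Q.orthonormal.1 j)]

theorem rank_le_nuclearNorm_add_nuclearNorm {m n : ℕ} {A : Matrix (Fin m) (Fin n) ℝ}
    {Z : Matrix (Fin n) (Fin n) ℝ} {L : Matrix (Fin m) (Fin m) ℝ} (h : A = A * Z + L * A) :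
    (A.rank : ℝ) ≤ nuclearNorm Z + nuclearNorm L := by
  set hA := isHermitian_conjTranspose_mul_self A
  set v : {i // hA.eigenvalues i ≠ 0} → EuclideanSpace ℝ (Fin n) := fun i ↦ hA.eigenvectorBasis i
  have hv : Orthonormal ℝ v := hA.eigenvectorBasis.orthonormal.comp _ Subtype.val_injective
  obtain ⟨u, σ, hu, hσ⟩ := (toEuclideanLin A).exists_singular_pairs hv
    (fun i ↦ A.adjoint_toEuclideanLin_apply_eigenvectorBasis i) (fun i ↦ i.2)
  have hT : toEuclideanLin A =
      toEuclideanLin A ∘ₗ toEuclideanLin Z + toEuclideanLin L ∘ₗ toEuclideanLin A := by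
    conv_lhs => rw [h]
    simp only [map_add, toLpLin_mul_same]
  calc (A.rank : ℝ)
        = ∑ i, (⟪v i, toEuclideanLin Z (v i)⟫_ℝ + ⟪u i, toEuclideanLin L (u i)⟫_ℝ) := by
        rw [← rank_conjTranspose_mul_self, hA.rank_eq_card_non_zero_eigs, Finset.sum_congr rfl
          fun i _ ↦ LinearMap.inner_add_inner_eq_one_of_eq_comp_add_comp hT (hσ i).1 (hu.1 i)
            (hσ i).2.1 (hσ i).2.2]
        simp
    _ ≤ nuclearNorm Z + nuclearNorm L := by
        rw [Finset.sum_add_distrib]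
        exact add_le_add (sum_inner_toEuclideanLin_le_nuclearNorm Z hv hv _)
          (sum_inner_toEuclideanLin_le_nuclearNorm L hu hu _)

namespace Matrix.IsHermitian

variable {𝕜 : Type*} [RCLike 𝕜] {n : Type*} [Fintype n] [DecidableEq n] {H : Matrix n n 𝕜}

noncomputable def rangeProjection (hH : H.IsHermitian) : Matrix n n 𝕜 :=
  (hH.eigenvectorUnitary : Matrix n n 𝕜) *
    diagonal (fun i ↦ if hH.eigenvalues i = 0 then 0 else 1) *
    star (hH.eigenvectorUnitary : Matrix n n 𝕜)

variable (hH : H.IsHermitian)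

theorem conjTranspose_rangeProjection : hH.rangeProjectionᴴ = hH.rangeProjection := by
  simp only [rangeProjection, conjTranspose_mul, diagonal_conjTranspose, star_eq_conjTranspose,
    conjTranspose_conjTranspose, Matrix.mul_assoc]
  congr 3
  ext i
  split_ifs <;> simp [*]

theorem rangeProjection_mul_self :
    hH.rangeProjection * hH.rangeProjection = hH.rangeProjection := by
  simp only [rangeProjection, Matrix.mul_assoc, ← Matrix.mul_assoc (star _)
    (hH.eigenvectorUnitary : Matrix n n 𝕜), Unitary.coe_star_mul_self, Matrix.one_mul]
  simp only [← Matrix.mul_assoc, diagonal_mul_diagonal]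
  congr 3
  ext i
  split_ifs <;> simp

theorem mul_rangeProjection : H * hH.rangeProjection = H := by
  conv_lhs => arg 1; rw [hH.spectral_theorem]
  conv_rhs => rw [hH.spectral_theorem]
  simp only [rangeProjection, Unitary.conjStarAlgAut_apply, Matrix.mul_assoc,
    ← Matrix.mul_assoc (star _) (hH.eigenvectorUnitary : Matrix n n 𝕜),
    Unitary.coe_star_mul_self, Matrix.one_mul]
  simp only [← Matrix.mul_assoc, diagonal_mul_diagonal]
  congr 3
  ext i
  split_ifs <;> simp [*]

theorem rank_rangeProjection : hH.rangeProjection.rank = H.rank := by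
  rw [hH.rank_eq_card_non_zero_eigs, rangeProjection, ← Unitary.coe_star]
  simp [-isUnit_iff_ne_zero, -Unitary.coe_star, rank_diagonal]

theorem eigenvalues_eq_zero_or_one_of_mul_self (h : H * H = H) (i : n) :
    hH.eigenvalues i = 0 ∨ hH.eigenvalues i = 1 := by
  set x := WithLp.ofLp (hH.eigenvectorBasis i)
  have hx : x ≠ 0 := (WithLp.ofLp_eq_zero 2).ne.2 (hH.eigenvectorBasis.orthonormal.ne_zero i)
  have hHx : H *ᵥ x = hH.eigenvalues i • x := hH.mulVec_eigenvectorBasis i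
  have hsq : (hH.eigenvalues i * hH.eigenvalues i - hH.eigenvalues i) • x = 0 := by
    rw [sub_smul, mul_smul, ← hHx, ← mulVec_smul, ← hHx, mulVec_mulVec, h, sub_self]
  have := (smul_eq_zero.mp hsq).resolve_right hx
  rcases mul_eq_zero.mp (show hH.eigenvalues i * (hH.eigenvalues i - 1) = 0 by linarith)
    with h0 | h1
  · exact .inl h0
  · exact .inr (sub_eq_zero.mp h1)

end Matrix.IsHermitian

theorem nuclearNorm_eq_rank_of_mul_conjTranspose_mul_self {p q : ℕ}
    {P : Matrix (Fin p) (Fin q) ℝ} (h : P * Pᴴ * P = P) : nuclearNorm P = P.rank := by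
  have hidem : (Pᴴ * P) * (Pᴴ * P) = Pᴴ * P := by
    rw [Matrix.mul_assoc, ← Matrix.mul_assoc P, h]
  rw [← rank_conjTranspose_mul_self,
    (isHermitian_conjTranspose_mul_self P).rank_eq_card_non_zero_eigs, Fintype.card_subtype,
    Finset.natCast_card_filter, nuclearNorm]
  refine Finset.sum_congr rfl fun i _ ↦ ?_
  rcases (isHermitian_conjTranspose_mul_self P).eigenvalues_eq_zero_or_one_of_mul_self hidem i
    with h | h <;> rw [h] <;> simp

open scoped ComplexOrder in
theorem Matrix.mul_rangeProjection_conjTranspose_mul_self {𝕜 : Type*} [RCLike 𝕜] {m n : Type*}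
    [Fintype m] [Fintype n] [DecidableEq n] (A : Matrix m n 𝕜) :
    A * (isHermitian_conjTranspose_mul_self A).rangeProjection = A := by
  have h := (conjTranspose_mul_self_mul_eq_zero A
    ((isHermitian_conjTranspose_mul_self A).rangeProjection - 1)).mp (by
      rw [Matrix.mul_sub, IsHermitian.mul_rangeProjection, Matrix.mul_one, sub_self])
  rwa [Matrix.mul_sub, Matrix.mul_one, sub_eq_zero] at h

theorem stmt_14 {m n : ℕ} (A : Matrix (Fin m) (Fin n) ℝ) :
    (∀ (Z : Matrix (Fin n) (Fin n) ℝ) (L : Matrix (Fin m) (Fin m) ℝ),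
        A = A * Z + L * A → (A.rank : ℝ) ≤ nuclearNorm Z + nuclearNorm L) ∧
    IsLeast {c : ℝ | ∃ (Z : Matrix (Fin n) (Fin n) ℝ) (L : Matrix (Fin m) (Fin m) ℝ),
        A = A * Z + L * A ∧ c = nuclearNorm Z + nuclearNorm L} (A.rank : ℝ) := by
  set hA := isHermitian_conjTranspose_mul_self A
  have hP :
      hA.rangeProjection * hA.rangeProjectionᴴ * hA.rangeProjection = hA.rangeProjection := by
    rw [hA.conjTranspose_rangeProjection, hA.rangeProjection_mul_self, hA.rangeProjection_mul_self]
  refine ⟨fun Z L h ↦ rank_le_nuclearNorm_add_nuclearNorm h, ⟨hA.rangeProjection, 0, ?_, ?_⟩, ?_⟩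
  · rw [A.mul_rangeProjection_conjTranspose_mul_self, Matrix.zero_mul, add_zero]
  · rw [nuclearNorm_eq_rank_of_mul_conjTranspose_mul_self hP,
      nuclearNorm_eq_rank_of_mul_conjTranspose_mul_self (by simp), hA.rank_rangeProjection,
      rank_conjTranspose_mul_self, rank_zero, Nat.cast_zero, add_zero]
  · rintro c ⟨Z, L, h, rfl⟩
    exact rank_le_nuclearNorm_add_nuclearNorm h
end
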